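/- arXiv:1406.5981 — 2 statements merged into one kernel-verified Lean document; each statement's English description precedes it below -/
import Mathlib

section
/- Let D₁, D₂, a, c, p, q, r be as in the coframe calculus of a principal frame (Codazzi equations D₂a = −p(c−a), D₁c = −q(c−a); Gauss equation split as D₂p = r + ½(ac+p²+q²), D₁q = r − ½(ac+p²+q²); commutation rule D₁D₂g − D₂D₁g = pD₁g + qD₂g). Define H = (a+c)/2 and the Laplace–Beltrami operator Δg = D₁D₁g + D₂D₂g + q·D₁g − p·D₂g. Then ΔH = (1/2)(D₁D₁a + D₂D₂c) − r(c−a) + q·D₁a − p·D₂c. -/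
/-- the Laplace–Beltrami operator applied to the mean curvature
`H = (a+c)/2` in terms of `a₁₁`, `c₂₂` and the auxiliary variable `r`. -/
theorem stmt_3 {U : Set (EuclideanSpace ℝ (Fin 2))} (hU : IsOpen U)
    (D₁ D₂ : (U → ℝ) → (U → ℝ)) (a c p q r : U → ℝ)
    (hadd₁ : ∀ f g : U → ℝ, D₁ (f + g) = D₁ f + D₁ g)
    (hadd₂ : ∀ f g : U → ℝ, D₂ (f + g) = D₂ f + D₂ g)
    (hleib₁ : ∀ f g : U → ℝ, D₁ (f * g) = f * D₁ g + g * D₁ f)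
    (hleib₂ : ∀ f g : U → ℝ, D₂ (f * g) = f * D₂ g + g * D₂ f)
    (hconst₁ : ∀ s : ℝ, D₁ (fun _ => s) = 0)
    (hconst₂ : ∀ s : ℝ, D₂ (fun _ => s) = 0)
    (hcomm : ∀ g : U → ℝ, D₁ (D₂ g) - D₂ (D₁ g) = p * D₁ g + q * D₂ g)
    (hCod₁ : D₂ a = -(p * (c - a)))
    (hCod₂ : D₁ c = -(q * (c - a)))
    (hGauss₁ : D₂ p = r + (1 / 2) * (a * c + p ^ 2 + q ^ 2))
    (hGauss₂ : D₁ q = r - (1 / 2) * (a * c + p ^ 2 + q ^ 2))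
    (H : U → ℝ) (hH : H = (a + c) / 2) :
    D₁ (D₁ H) + D₂ (D₂ H) + q * D₁ H - p * D₂ H
      = (1 / 2) * (D₁ (D₁ a) + D₂ (D₂ c)) - r * (c - a) + q * D₁ a - p * D₂ c := by
  have h0₁ : D₁ (0 : U → ℝ) = 0 := hconst₁ 0
  have h0₂ : D₂ (0 : U → ℝ) = 0 := hconst₂ 0
  have hneg₁ : ∀ f : U → ℝ, D₁ (-f) = -D₁ f := fun f =>
    eq_neg_of_add_eq_zero_right (by rw [← hadd₁, add_neg_cancel]; exact h0₁)
  have hneg₂ : ∀ f : U → ℝ, D₂ (-f) = -D₂ f := fun f =>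
    eq_neg_of_add_eq_zero_right (by rw [← hadd₂, add_neg_cancel]; exact h0₂)
  have hsub₁ : ∀ f g : U → ℝ, D₁ (f - g) = D₁ f - D₁ g := fun f g => by
    rw [sub_eq_add_neg, hadd₁, hneg₁, sub_eq_add_neg]
  have hsub₂ : ∀ f g : U → ℝ, D₂ (f - g) = D₂ f - D₂ g := fun f g => by
    rw [sub_eq_add_neg, hadd₂, hneg₂, sub_eq_add_neg]
  have hHH : H + H = a + c := by
    funext y
    simp only [hH, Pi.add_apply, Pi.div_apply, Pi.ofNat_apply]
    ring
  have e3 : D₁ H + D₁ H = D₁ a + D₁ c := by rw [← hadd₁, hHH, hadd₁]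
  have e4 : D₂ H + D₂ H = D₂ a + D₂ c := by rw [← hadd₂, hHH, hadd₂]
  have e1 : D₁ (D₁ H) + D₁ (D₁ H) = D₁ (D₁ a) + D₁ (D₁ c) := by
    rw [← hadd₁, e3, hadd₁]
  have e2 : D₂ (D₂ H) + D₂ (D₂ H) = D₂ (D₂ a) + D₂ (D₂ c) := by
    rw [← hadd₂, e4, hadd₂]
  have e5 : D₁ (D₁ c)
      = -(q * (D₁ c - D₁ a) + (c - a) * (r - (1 / 2) * (a * c + p ^ 2 + q ^ 2))) := by
    rw [hCod₂, hneg₁, hleib₁, hsub₁, hCod₂, hGauss₂]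
  have e6 : D₂ (D₂ a)
      = -(p * (D₂ c - D₂ a) + (c - a) * (r + (1 / 2) * (a * c + p ^ 2 + q ^ 2))) := by
    rw [hCod₁, hneg₂, hleib₂, hsub₂, hCod₁, hGauss₁]
  funext x
  have e1' := congrFun e1 x
  have e2' := congrFun e2 x
  have e3' := congrFun e3 x
  have e4' := congrFun e4 x
  have e5' := congrFun e5 x
  have e6' := congrFun e6 x
  simp only [Pi.add_apply, Pi.sub_apply, Pi.mul_apply, Pi.neg_apply, Pi.pow_apply,
    Pi.ofNat_apply, Pi.div_apply, Pi.one_apply] at *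
  linear_combination (1 / 2 : ℝ) * e1' + (1 / 2 : ℝ) * e2' + (q x / 2) * e3'
    - (p x / 2) * e4' + (1 / 2 : ℝ) * e5' + (1 / 2 : ℝ) * e6'
end

section
/- Let α : J → ℝ³ be a smooth unit-speed curve on an open interval J with Frenet frame (T, N, B) satisfying T' = κN, N' = −κT + τB, B' = −τN, where κ, τ : J → ℝ are smooth and κ is nowhere zero. Fix x₀ ∈ J and a₀ ∈ ℝ, and set s(x) = −∫_{x₀}^x τ(u) du + a₀, W(x) = cos(s(x)) N(x) + sin(s(x)) B(x), and JW(x) = −sin(s(x)) N(x) + cos(s(x)) B(x). Then W' = −(κ cos s) T and (JW)' = (κ sin s) T; in particular the derivatives of W and JW are everywhere parallel to T, so (T, W, JW) is a relatively parallel (Bishop) adapted frame along α. -/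
open scoped RealInnerProductSpace

open Real

section RotatedFrame

variable {E : Type*} [NormedAddCommGroup E] [NormedSpace ℝ E]
  {N B : ℝ → E} {θ : ℝ → ℝ} {v : E} {t x : ℝ}

-- Turning `(N, B)` through an angle `θ` with `θ' = -t` exactly cancels the `t`-coupling
-- between `N'` and `B'`; this is why `s' = -τ` makes `W` and `JW` relatively parallel.
theorem hasDerivAt_cos_smul_add_sin_smul_of_rotation (hN : HasDerivAt N (v + t • B x) x)
    (hB : HasDerivAt B (-t • N x) x) (hθ : HasDerivAt θ (-t) x) :
    HasDerivAt (fun y => cos (θ y) • N y + sin (θ y) • B y) (cos (θ x) • v) x :=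
  ((hθ.cos.smul hN).add (hθ.sin.smul hB)).congr_deriv (by module)

theorem hasDerivAt_neg_sin_smul_add_cos_smul_of_rotation (hN : HasDerivAt N (v + t • B x) x)
    (hB : HasDerivAt B (-t • N x) x) (hθ : HasDerivAt θ (-t) x) :
    HasDerivAt (fun y => -sin (θ y) • N y + cos (θ y) • B y) (-sin (θ x) • v) x :=
  ((hθ.sin.neg.smul hN).add (hθ.cos.smul hB)).congr_deriv
    (by simp only [Pi.neg_apply]; module)

end RotatedFrame

theorem hasDerivAt_neg_integral_add_const {τ : ℝ → ℝ} (hτ : Continuous τ) (x₀ a₀ x : ℝ) :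
    HasDerivAt (fun y => -(∫ u in x₀..y, τ u) + a₀) (-τ x) x :=
  ((hτ.integral_hasStrictDerivAt x₀ x).hasDerivAt.neg).add_const a₀

theorem stmt_6_general (J : Set ℝ)
    (T N B : ℝ → EuclideanSpace ℝ (Fin 3)) (κ τ : ℝ → ℝ)
    (hτcont : Continuous τ)
    (hN : ∀ x ∈ J, HasDerivAt N (-(κ x) • T x + τ x • B x) x)
    (hB : ∀ x ∈ J, HasDerivAt B (-(τ x) • N x) x)
    (x₀ : ℝ) (a₀ : ℝ)
    (s : ℝ → ℝ) (hs : ∀ x, s x = -(∫ u in x₀..x, τ u) + a₀)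
    (W JW : ℝ → EuclideanSpace ℝ (Fin 3))
    (hW : ∀ x, W x = Real.cos (s x) • N x + Real.sin (s x) • B x)
    (hJW : ∀ x, JW x = -Real.sin (s x) • N x + Real.cos (s x) • B x) :
    ∀ x ∈ J,
      HasDerivAt W (-(κ x * Real.cos (s x)) • T x) x ∧
      HasDerivAt JW ((κ x * Real.sin (s x)) • T x) x := by
  intro x hx
  have hs' : HasDerivAt s (-τ x) x :=
    funext hs ▸ hasDerivAt_neg_integral_add_const hτcont x₀ a₀ x
  rw [funext hW, funext hJW]
  constructor
  · exact (hasDerivAt_cos_smul_add_sin_smul_of_rotation (hN x hx) (hB x hx) hs').congr_deriv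
      (by rw [smul_smul]; ring_nf)
  · exact (hasDerivAt_neg_sin_smul_add_cos_smul_of_rotation (hN x hx) (hB x hx) hs').congr_deriv
      (by rw [smul_smul]; ring_nf)

/-- the frame `(T, W, JW)` with `W = cos(s)N + sin(s)B`,
`s(x) = −∫_{x₀}^x τ + a₀`, is a relatively parallel (Bishop) adapted frame:
`W' = −(κ cos s)T` and `(JW)' = (κ sin s)T`. -/
theorem stmt_6 (J : Set ℝ) (hJ : IsOpen J) (hJconn : J.OrdConnected)
    (α T N B : ℝ → EuclideanSpace ℝ (Fin 3)) (κ τ : ℝ → ℝ)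
    (hτcont : Continuous τ)
    (hα : ∀ x ∈ J, HasDerivAt α (T x) x)
    (hunit : ∀ x ∈ J, ‖T x‖ = 1)
    (hκ : ∀ x ∈ J, κ x ≠ 0)
    (hT : ∀ x ∈ J, HasDerivAt T (κ x • N x) x)
    (hN : ∀ x ∈ J, HasDerivAt N (-(κ x) • T x + τ x • B x) x)
    (hB : ∀ x ∈ J, HasDerivAt B (-(τ x) • N x) x)
    (x₀ : ℝ) (hx₀ : x₀ ∈ J) (a₀ : ℝ)
    (s : ℝ → ℝ) (hs : ∀ x, s x = -(∫ u in x₀..x, τ u) + a₀)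
    (W JW : ℝ → EuclideanSpace ℝ (Fin 3))
    (hW : ∀ x, W x = Real.cos (s x) • N x + Real.sin (s x) • B x)
    (hJW : ∀ x, JW x = -Real.sin (s x) • N x + Real.cos (s x) • B x) :
    ∀ x ∈ J,
      HasDerivAt W (-(κ x * Real.cos (s x)) • T x) x ∧
      HasDerivAt JW ((κ x * Real.sin (s x)) • T x) x :=
  stmt_6_general J T N B κ τ hτcont hN hB x₀ a₀ s hs W JW hW hJW
end
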